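/- Main correctness theorem: let A be a Wheeler DFA with Wheeler order u_1 < ... < u_n. For each adjacent pair, u_i ≢ u_{i+1} (not in the same class of the minimum-WDFA equivalence) if and only if either λ(u_i) ≠ λ(u_{i+1}), or the border (u_i, u_{i+1}) reaches, in the border graph B(A), some border (u_j, u_{j+1}) with out(u_j) ≠ out(u_{j+1}) or final(u_j) ≠ final(u_{j+1}). -/

import Mathlib

/-- A Wheeler DFA over a linearly ordered state set `Q` (the Wheeler order)
and a linearly ordered alphabet `A`.  The transition function is partial
(`Option`-valued).  The three Wheeler axioms are part of the structure. -/
structure WDFA (Q A : Type) [LinearOrder Q] [LinearOrder A] where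
  delta : Q → A → Option Q
  start : Q
  F : Set Q
  /-- Wheeler axiom (i): the initial state is minimum. -/
  start_le : ∀ u, start ≤ u
  /-- Wheeler axiom (ii). -/
  w2 : ∀ {u v : Q} {a b : A} {u' v' : Q},
      delta u a = some u' → delta v b = some v' → a < b → u' < v'
  /-- Wheeler axiom (iii). -/
  w3 : ∀ {u v : Q} {a : A} {u' v' : Q},
      delta u a = some u' → delta v a = some v' → u < v → u' ≤ v'

namespace WDFA

variable {Q A : Type} [LinearOrder Q] [LinearOrder A]

/-- Extension of the (partial) transition function to strings. -/
def dhat (M : WDFA Q A) : Q → List A → Option Q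
  | q, [] => some q
  | q, a :: w => (M.delta q a).bind (fun p => M.dhat p w)

/-- `q` accepts the string `w`. -/
def Acc (M : WDFA Q A) (q : Q) (w : List A) : Prop :=
  ∃ p, M.dhat q w = some p ∧ p ∈ M.F

/-- Set of labels of outgoing edges of `q`. -/
def out (M : WDFA Q A) (q : Q) : Set A := {a | (M.delta q a).isSome}

/-- Myhill–Nerode state equivalence (with equal domains of definition). -/
def MN (M : WDFA Q A) (u v : Q) : Prop :=
  ∀ w : List A, (M.dhat u w).isSome = (M.dhat v w).isSome ∧ (M.Acc u w ↔ M.Acc v w)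

/-- Myhill–Nerode state equivalence, acceptance-only version
(undefined counts as rejecting). -/
def MNacc (M : WDFA Q A) (u v : Q) : Prop :=
  ∀ w : List A, M.Acc u w ↔ M.Acc v w

/-- `u` and `v` are adjacent in the Wheeler order. -/
def Adj (M : WDFA Q A) (u v : Q) : Prop :=
  u < v ∧ ∀ w : Q, ¬ (u < w ∧ w < v)

/-- `lam` is the incoming-label map: `lam start = ⊥` (the special symbol `#`)
and every transition entering `v` is labelled `lam v`. -/
def HasLam (M : WDFA Q A) (lam : Q → WithBot A) : Prop :=
  lam M.start = ⊥ ∧ ∀ u a v, M.delta u a = some v → lam v = (a : WithBot A)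

/-- Every non-initial state has an incoming transition (reachability). -/
def Reach1 (M : WDFA Q A) : Prop :=
  ∀ u, u ≠ M.start → ∃ p a, M.delta p a = some u

/-- Every state accepts some string (is final or reaches a final state). -/
def Coacc (M : WDFA Q A) : Prop := ∀ u, ∃ w, M.Acc u w

/-- The minimum-WDFA equivalence `≡`: `u` and `v` have the same incoming
label, are Myhill–Nerode equivalent, and so is every state between them in
the Wheeler order. -/
def Equ (M : WDFA Q A) (lam : Q → WithBot A) (u v : Q) : Prop :=
  lam u = lam v ∧ M.MN u v ∧
    ∀ w, min u v ≤ w → w ≤ max u v → lam w = lam u ∧ M.MN w u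

/-- `(u,v)` is a node of the border graph: adjacent states with equal
incoming labels. -/
def IsBorder (M : WDFA Q A) (lam : Q → WithBot A) (u v : Q) : Prop :=
  M.Adj u v ∧ lam u = lam v

/-- Edge relation of the border graph `B(A)`: there is an edge from the
border `x` to the border `y` whenever `x.1 = δ(y.1, λ(x.1))` and
`x.2 = δ(y.2, λ(x.1))`. -/
def EdgeZ (M : WDFA Q A) (lam : Q → WithBot A) : Q × Q → Q × Q → Prop :=
  fun x y => M.IsBorder lam x.1 x.2 ∧ M.IsBorder lam y.1 y.2 ∧
    ∃ a : A, lam x.1 = (a : WithBot A) ∧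
      M.delta y.1 a = some x.1 ∧ M.delta y.2 a = some x.2

/-- Transition function of the quotient automaton `A/st`
(`δ([u],a) = [δ(u,a)]`, implemented via representatives). -/
noncomputable def qdelta (M : WDFA Q A) (st : Setoid Q) (c : Quotient st) (a : A) :
    Option (Quotient st) :=
  (M.delta (Quotient.out c) a).map (Quotient.mk st)

/-- String extension of the quotient transition function. -/
noncomputable def qdhat (M : WDFA Q A) (st : Setoid Q) : Quotient st → List A → Option (Quotient st)
  | c, [] => some c
  | c, a :: w => (M.qdelta st c a).bind (fun d => M.qdhat st d w)

/-- The quotient automaton accepts `w`. -/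
def qAcc (M : WDFA Q A) (st : Setoid Q) (w : List A) : Prop :=
  ∃ c, M.qdhat st (Quotient.mk st M.start) w = some c ∧
    ∃ u ∈ M.F, Quotient.mk st u = c

/-- Order induced on `≡`-classes by the Wheeler order (classes are
intervals, so comparing arbitrary representatives is well defined). -/
def qle (st : Setoid Q) (c d : Quotient st) : Prop :=
  c = d ∨ ∀ u v : Q, Quotient.mk st u = c → Quotient.mk st v = d → u < v

end WDFA

/-!
Read a word separating `u_i` and `u_{i+1}` in parallel from both states. While both runs
are defined and have not merged, the Wheeler axioms keep the two current states adjacent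
(any state strictly between them would have to be entered from strictly between the
previous pair) and entered by the same letter, so the pair walks backwards along the border
graph. The runs cannot merge on a separating word, so the walk ends where one run gets stuck
(the outgoing labels differ) or where the word ends (the finality differs). Conversely, a border reached from `(u_i, u_{i+1})`
is reached by a common word; finality, or an outgoing letter of one state only followed by
a word accepted after it (co-accessibility), then extends it to a separating word.
-/

namespace WDFA

variable {Q A : Type} [LinearOrder Q] [LinearOrder A] {M : WDFA Q A} {lam : Q → WithBot A}

def LocallyDistinct (M : WDFA Q A) (u v : Q) : Prop :=
  M.out u ≠ M.out v ∨ ¬ (u ∈ M.F ↔ v ∈ M.F)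

lemma dhat_append (u : Q) (w x : List A) :
    M.dhat u (w ++ x) = (M.dhat u w).bind (fun p => M.dhat p x) := by
  induction w generalizing u with
  | nil => simp [dhat]
  | cons a w ih =>
    cases h : M.delta u a <;> simp [dhat, h, ih]

lemma acc_nil_iff {u : Q} : M.Acc u [] ↔ u ∈ M.F := by
  simp [Acc, dhat]

lemma acc_cons_iff {u v : Q} {a : A} {w : List A} (h : M.delta u a = some v) :
    M.Acc u (a :: w) ↔ M.Acc v w := by
  simp [Acc, dhat, h]

lemma not_acc_cons {u : Q} {a : A} {w : List A} (h : M.delta u a = none) :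
    ¬ M.Acc u (a :: w) := by
  simp [Acc, dhat, h]

lemma acc_of_dhat_eq_some {u v : Q} {w x : List A} (h : M.dhat u w = some v)
    (hv : M.Acc v x) : M.Acc u (w ++ x) := by
  simpa [Acc, dhat_append, h] using hv

lemma out_eq_iff {u v : Q} :
    M.out u = M.out v ↔ ∀ a, (M.delta u a).isSome = (M.delta v a).isSome := by
  simp only [out, Set.ext_iff, Set.mem_ofPred_eq, Bool.coe_iff_coe]

lemma delta_le_delta {u v u' v' : Q} {a : A} (hu : M.delta u a = some u')
    (hv : M.delta v a = some v') (huv : u ≤ v) : u' ≤ v' := by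
  rcases huv.lt_or_eq with huv | rfl
  · exact M.w3 hu hv huv
  · exact (Option.some_injective _ (hu.symm.trans hv)).le

lemma Adj.delta (hreach : M.Reach1) {u v u' v' : Q} {a : A} (huv : M.Adj u v)
    (hu : M.delta u a = some u') (hv : M.delta v a = some v') (hlt : u' < v') :
    M.Adj u' v' := by
  refine ⟨hlt, fun z ⟨hu'z, hzv'⟩ => ?_⟩
  obtain ⟨p, b, hp⟩ := hreach z ((M.start_le u').trans_lt hu'z).ne'
  rcases lt_trichotomy b a with hba | rfl | hab
  · exact (M.w2 hp hu hba).asymm hu'z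
  · rcases le_or_gt p u with hpu | hup
    · exact (delta_le_delta hp hu hpu).not_gt hu'z
    · exact (delta_le_delta hv hp (not_lt.mp fun hpv => huv.2 p ⟨hup, hpv⟩)).not_gt hzv'
  · exact (M.w2 hv hp hab).asymm hzv'

lemma edgeZ_of_delta (hlam : M.HasLam lam) (hreach : M.Reach1) {u v u' v' : Q} {a : A}
    (huv : M.IsBorder lam u v) (hu : M.delta u a = some u') (hv : M.delta v a = some v')
    (hlt : u' < v') : M.EdgeZ lam (u', v') (u, v) := by
  have hu' : lam u' = a := hlam.2 _ _ _ hu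
  have hv' : lam v' = a := hlam.2 _ _ _ hv
  exact ⟨⟨huv.1.delta hreach hu hv hlt, hu'.trans hv'.symm⟩, huv, a, hu', hu, hv⟩

theorem exists_locallyDistinct_of_not_acc_iff (hlam : M.HasLam lam) (hreach : M.Reach1)
    (w : List A) {u v : Q} (huv : M.IsBorder lam u v) (hw : ¬ (M.Acc u w ↔ M.Acc v w)) :
    ∃ u' v', M.IsBorder lam u' v' ∧
      Relation.ReflTransGen (M.EdgeZ lam) (u', v') (u, v) ∧ M.LocallyDistinct u' v' := by
  induction w generalizing u v with
  | nil => exact ⟨u, v, huv, .refl, .inr (by simpa only [acc_nil_iff] using hw)⟩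
  | cons a w ih =>
    by_cases hout : M.out u = M.out v
    swap
    · exact ⟨u, v, huv, .refl, .inl hout⟩
    have hsome := out_eq_iff.mp hout a
    cases hu : M.delta u a with
    | none =>
      have hv : M.delta v a = none := by simpa [hu] using hsome.symm
      exact absurd (iff_of_false (not_acc_cons hu) (not_acc_cons hv)) hw
    | some u' =>
      obtain ⟨v', hv⟩ := Option.isSome_iff_exists.mp (hu ▸ hsome).symm
      rw [acc_cons_iff hu, acc_cons_iff hv] at hw
      rcases (delta_le_delta hu hv huv.1.1.le).lt_or_eq with hlt | rfl
      · have hedge := edgeZ_of_delta hlam hreach huv hu hv hlt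
        obtain ⟨u'', v'', hb, hpath, hd⟩ := ih hedge.1 hw
        exact ⟨u'', v'', hb, hpath.tail hedge, hd⟩
      · exact absurd Iff.rfl hw

lemma exists_dhat_of_reflTransGen_edgeZ {x y : Q × Q}
    (h : Relation.ReflTransGen (M.EdgeZ lam) x y) :
    ∃ w, M.dhat y.1 w = some x.1 ∧ M.dhat y.2 w = some x.2 := by
  induction h with
  | refl => exact ⟨[], rfl, rfl⟩
  | tail _ hedge ih =>
    obtain ⟨w, h1, h2⟩ := ih
    obtain ⟨-, -, a, -, ha1, ha2⟩ := hedge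
    exact ⟨a :: w, by simp [dhat, ha1, h1], by simp [dhat, ha2, h2]⟩

lemma MNacc.symm {u v : Q} (h : M.MNacc u v) : M.MNacc v u :=
  fun w => (h w).symm

lemma MNacc.dhat {u v u' v' : Q} {w : List A} (h : M.MNacc u v)
    (hu : M.dhat u w = some u') (hv : M.dhat v w = some v') : M.MNacc u' v' := by
  intro x
  simpa [Acc, dhat_append, hu, hv] using h (w ++ x)

lemma MNacc.mem_F_iff {u v : Q} (h : M.MNacc u v) : u ∈ M.F ↔ v ∈ M.F := by
  simpa only [acc_nil_iff] using h []

lemma MNacc.isSome_delta (hco : M.Coacc) {u v : Q} {a : A} (h : M.MNacc u v)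
    (hu : (M.delta u a).isSome) : (M.delta v a).isSome := by
  obtain ⟨u', hu'⟩ := Option.isSome_iff_exists.mp hu
  obtain ⟨x, hx⟩ := hco u'
  have hv : M.Acc v (a :: x) := (h _).mp ((acc_cons_iff hu').mpr hx)
  cases hva : M.delta v a
  · exact absurd hv (not_acc_cons hva)
  · rfl

lemma MNacc.out_eq (hco : M.Coacc) {u v : Q} (h : M.MNacc u v) : M.out u = M.out v :=
  out_eq_iff.mpr fun _ => Bool.eq_iff_iff.mpr ⟨h.isSome_delta hco, h.symm.isSome_delta hco⟩

lemma MNacc.not_locallyDistinct (hco : M.Coacc) {u v : Q} (h : M.MNacc u v) :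
    ¬ M.LocallyDistinct u v := by
  rintro (hout | hF)
  exacts [hout (h.out_eq hco), hF h.mem_F_iff]

end WDFA

open WDFA in
/-- main correctness theorem: adjacent states `u_i, u_{i+1}`
are in different classes of the minimum-WDFA equivalence `≡` iff either their
incoming labels differ, or the border `(u_i, u_{i+1})` is connected in the
border graph to some border `(u_j, u_{j+1})` with different outgoing label
sets or different finality. -/
theorem wdfa_minimization_correct {Q A : Type} [LinearOrder Q] [LinearOrder A]
    (M : WDFA Q A) (lam : Q → WithBot A) (hlam : M.HasLam lam)
    (hreach : M.Reach1) (hco : M.Coacc)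
    (ui ui1 : Q) (hadj : M.Adj ui ui1) :
    ¬ (lam ui = lam ui1 ∧ M.MNacc ui ui1) ↔
      (lam ui ≠ lam ui1 ∨
        ∃ uj uj1 : Q, M.IsBorder lam uj uj1 ∧
          Relation.ReflTransGen (M.EdgeZ lam) (uj, uj1) (ui, ui1) ∧
          (M.out uj ≠ M.out uj1 ∨ ¬ (uj ∈ M.F ↔ uj1 ∈ M.F))) := by
  constructor
  · intro h
    by_cases hl : lam ui = lam ui1
    · obtain ⟨w, hw⟩ := not_forall.mp fun hm => h ⟨hl, hm⟩
      exact .inr (exists_locallyDistinct_of_not_acc_iff hlam hreach w ⟨hadj, hl⟩ hw)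
    · exact .inl hl
  · rintro (hl | ⟨uj, uj1, -, hpath, hd⟩) ⟨hl', hm⟩
    · exact hl hl'
    · obtain ⟨w, hu, hv⟩ := exists_dhat_of_reflTransGen_edgeZ hpath
      exact (hm.dhat hu hv).not_locallyDistinct hco hd
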